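/- arXiv:2009.00800 — 2 statements merged into one kernel-verified Lean document; each statement's English description precedes it below -/
import Mathlib

section
/- Let f : 2^N → ℝ be monotone and submodular with f(∅) = 0 and fmax > 0, let each element u ∈ N have cost c(u) > 0, and let γ ≥ 1. Let π be a permutation of N such that for every index i with f(π_i | π_{1:i−1}) > 0 and every element u ∈ N one has f(u | π_{1:i−1})/c(u) ≤ γ · f(π_i | π_{1:i−1})/c(π_i). Let S := {π_i : f(π_i | π_{1:i−1}) > 0}. Then f(S) = f(N), and c(S) ≤ γ · (ln(fmax/fmin) + 1) · c(S*) for every S* ⊆ N with f(S*) = f(N). -/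
/-!
Wolsey's charging argument. Step `i` of the trace is charged the price
`c(π_i) / f(π_i | π_{1:i-1})` per unit of coverage; with `w_i` the largest price charged so far,
the cost of `S` is at most `∑ w_i (D_i - D_{i+1})`, where `D_i = f(N) - f(π_{1:i})` is the
remaining deficit. Submodularity bounds `D_i` by `∑_{u ∈ S*} f(u | π_{1:i})`, and as `w` is
nondecreasing, Abel summation carries this bound over to the weighted sums. For fixed `u`, the
greedy condition gives `w_i ≤ γ c(u) / f(u | π_{1:i})`, and the nonincreasing marginals
`a_i = f(u | π_{1:i})`, with values in `{0} ∪ [fmin, fmax]`, satisfy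
`∑ (a_i - a_{i+1}) / a_i ≤ ln(fmax / fmin) + 1`.

Full coverage holds because adding an element to two nested sets of equal value keeps their
values equal, so skipping the elements of zero gain loses nothing.
-/

open Finset

/-- The marginal value `f(u | C) := f({u} ∪ C) - f C`. -/
def marg {V : Type*} [DecidableEq V] (f : Finset V → ℝ) (u : V) (C : Finset V) : ℝ :=
  f (insert u C) - f C

/-- The prefix `π_{1:i}` of a permutation `π` (0-indexed: the set of the first `i` elements). -/
def pref {V : Type*} [DecidableEq V] {n : ℕ} (π : Fin n → V) (i : ℕ) : Finset V :=
  (Finset.univ.filter fun j : Fin n => (j : ℕ) < i).image π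

/-- The marginal coverage `mff_π(π_i) := f(π_i | π_{1:i-1})` of the element at position `i`. -/
def mff {V : Type*} [DecidableEq V] {n : ℕ} (f : Finset V → ℝ) (π : Fin n → V) (i : Fin n) : ℝ :=
  marg f (π i) (pref π i)

section Submodular

variable {V : Type*} [DecidableEq V] {f : Finset V → ℝ}

lemma marg_nonneg (hmono : Monotone f) (u : V) (A : Finset V) : 0 ≤ marg f u A :=
  sub_nonneg.2 (hmono (subset_insert u A))

lemma marg_le_marg_of_subset (hmono : Monotone f)
    (hsub : ∀ A B : Finset V, f (A ∪ B) + f (A ∩ B) ≤ f A + f B)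
    (u : V) {A B : Finset V} (hAB : A ⊆ B) : marg f u B ≤ marg f u A := by
  by_cases hu : u ∈ B
  · rw [marg, insert_eq_self.2 hu, sub_self]
    exact marg_nonneg hmono u A
  · have h := hsub (insert u A) B
    rw [insert_union, union_eq_right.2 hAB, insert_inter_of_notMem hu,
      inter_eq_left.2 hAB] at h
    unfold marg
    linarith

lemma apply_insert_eq_of_subset_of_eq (hmono : Monotone f)
    (hsub : ∀ A B : Finset V, f (A ∪ B) + f (A ∩ B) ≤ f A + f B)
    (u : V) {A B : Finset V} (hAB : A ⊆ B) (hf : f A = f B) :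
    f (insert u A) = f (insert u B) := by
  have h := marg_le_marg_of_subset hmono hsub u hAB
  unfold marg at h
  exact le_antisymm (hmono (insert_subset_insert u hAB)) (by linarith)

lemma sub_le_sum_marg (hmono : Monotone f)
    (hsub : ∀ A B : Finset V, f (A ∪ B) + f (A ∩ B) ≤ f A + f B) (A B : Finset V) :
    f (A ∪ B) - f B ≤ ∑ u ∈ A, marg f u B := by
  induction A using Finset.induction_on with
  | empty => simp
  | @insert a A ha ih =>
    have h := marg_le_marg_of_subset hmono hsub a (subset_union_right (s₁ := A) (s₂ := B))
    have hmarg : marg f a (A ∪ B) = f (insert a (A ∪ B)) - f (A ∪ B) := rfl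
    rw [sum_insert ha, insert_union]
    linarith

end Submodular

section Prefix

variable {V : Type*} [DecidableEq V] {n : ℕ} (π : Fin n → V)

@[simp]
lemma pref_zero : pref π 0 = ∅ := by
  simp [pref]

lemma pref_mono : Monotone (pref π) := fun _ _ hij =>
  image_subset_image fun j hj => by
    simp only [mem_filter, mem_univ, true_and] at hj ⊢
    omega

lemma pref_succ {i : ℕ} (hi : i < n) : pref π (i + 1) = insert (π ⟨i, hi⟩) (pref π i) := by
  rw [pref, pref, ← image_insert]
  congr 1
  ext j
  simp [Fin.ext_iff, Nat.le_iff_lt_or_eq, or_comm]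

lemma pref_eq_univ [Fintype V] (hπ : Function.Surjective π) : pref π n = univ :=
  eq_univ_of_forall fun u => by
    obtain ⟨j, rfl⟩ := hπ u
    exact mem_image_of_mem π (by simp)

lemma mff_eq_sub (f : Finset V → ℝ) (i : Fin n) :
    mff f π i = f (pref π (i + 1)) - f (pref π i) := by
  rw [pref_succ π i.isLt]
  rfl

end Prefix

noncomputable def positiveGainSet {V : Type*} [DecidableEq V] {n : ℕ} (f : Finset V → ℝ)
    (π : Fin n → V) : Finset V :=
  (univ.filter fun i => 0 < mff f π i).image π

section Cover

variable {V : Type*} [DecidableEq V] {f : Finset V → ℝ} {n : ℕ}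

lemma apply_positiveGainSet_inter_pref (hmono : Monotone f)
    (hsub : ∀ A B : Finset V, f (A ∪ B) + f (A ∩ B) ≤ f A + f B)
    {π : Fin n → V} (hπ : Function.Injective π) :
    ∀ i ≤ n, f (positiveGainSet f π ∩ pref π i) = f (pref π i) := by
  intro i
  induction i with
  | zero => simp
  | succ i ih =>
    intro hi
    replace hi : i < n := hi
    have hmem : π ⟨i, hi⟩ ∈ positiveGainSet f π ↔ 0 < mff f π ⟨i, hi⟩ := by
      simp [positiveGainSet, hπ.mem_finset_image]
    rw [pref_succ π hi]
    by_cases hgain : 0 < mff f π ⟨i, hi⟩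
    · rw [inter_insert_of_mem (hmem.2 hgain)]
      exact apply_insert_eq_of_subset_of_eq hmono hsub _ inter_subset_right (ih hi.le)
    · have hzero : mff f π ⟨i, hi⟩ = 0 := (not_lt.1 hgain).antisymm (marg_nonneg hmono _ _)
      rw [inter_insert_of_notMem (mt hmem.1 hgain), ih hi.le]
      unfold mff marg at hzero
      linarith

lemma apply_positiveGainSet_eq_apply_univ [Fintype V] (hmono : Monotone f)
    (hsub : ∀ A B : Finset V, f (A ∪ B) + f (A ∩ B) ≤ f A + f B) (π : Fin n ≃ V) :
    f (positiveGainSet f π) = f univ := by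
  have h := apply_positiveGainSet_inter_pref hmono hsub π.injective n le_rfl
  rwa [pref_eq_univ π π.surjective, inter_univ] at h

end Cover

lemma sum_mul_sub_le_of_le {w D E : ℕ → ℝ} (hw : Monotone w) (hw₀ : 0 ≤ w 0)
    (hDE : ∀ i, D i ≤ E i) {n : ℕ} (hn : D n = E n) :
    ∑ i ∈ range n, w i * (D i - D (i + 1)) ≤ ∑ i ∈ range n, w i * (E i - E (i + 1)) := by
  -- Abel summation, carrying the boundary term `w m * (D m - E m) ≤ 0`, which vanishes at `n`.
  suffices key : ∀ m, ∑ i ∈ range m, w i * (D i - D (i + 1))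
      + w m * (D m - E m) ≤ ∑ i ∈ range m, w i * (E i - E (i + 1)) by
    simpa [hn] using key n
  intro m
  induction m with
  | zero => simpa using mul_nonpos_of_nonneg_of_nonpos hw₀ (sub_nonpos.2 (hDE 0))
  | succ m ih =>
    have hstep := mul_nonpos_of_nonneg_of_nonpos (sub_nonneg.2 (hw m.le_succ))
      (sub_nonpos.2 (hDE (m + 1)))
    rw [sum_range_succ, sum_range_succ]
    nlinarith

noncomputable def logPotential (m x : ℝ) : ℝ :=
  if m ≤ x then Real.log (x / m) + 1 else 0

section LogPotential

variable {m : ℝ}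

lemma logPotential_nonneg (hm : 0 < m) (x : ℝ) : 0 ≤ logPotential m x := by
  unfold logPotential
  split_ifs with hx
  · linarith [Real.log_nonneg ((one_le_div hm).2 hx)]
  · rfl

lemma logPotential_le (hm : 0 < m) {x M : ℝ} (hmM : m ≤ M) (hxM : x ≤ M) :
    logPotential m x ≤ Real.log (M / m) + 1 := by
  unfold logPotential
  split_ifs with hx
  · gcongr
    exact div_pos (hm.trans_le hx) hm
  · linarith [Real.log_nonneg ((one_le_div hm).2 hmM)]

lemma sub_div_le_logPotential_sub (hm : 0 < m) {a b : ℝ} (hb : 0 ≤ b) (hba : b ≤ a)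
    (ha : m ≤ a) (hbm : 0 < b → m ≤ b) :
    (a - b) / a ≤ logPotential m a - logPotential m b := by
  have ha₀ : 0 < a := hm.trans_le ha
  rw [logPotential, if_pos ha]
  rcases hb.eq_or_lt with rfl | hb₀
  · rw [logPotential, if_neg (not_le.2 hm), sub_zero, div_self ha₀.ne']
    linarith [Real.log_nonneg ((one_le_div hm).2 ha)]
  · have hlog := Real.log_le_sub_one_of_pos (div_pos hb₀ ha₀)
    rw [Real.log_div hb₀.ne' ha₀.ne'] at hlog
    rw [logPotential, if_pos (hbm hb₀), Real.log_div ha₀.ne' hm.ne', Real.log_div hb₀.ne' hm.ne',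
      sub_div, div_self ha₀.ne']
    linarith

lemma sum_mul_sub_le_logPotential {a w : ℕ → ℝ} {K : ℝ} (hm : 0 < m) (ha : Antitone a)
    (ha₀ : ∀ i, 0 ≤ a i) (ham : ∀ i, 0 < a i → m ≤ a i) (hK : 0 ≤ K)
    (hw : ∀ i, 0 < a i → w i ≤ K / a i) (n : ℕ) :
    ∑ i ∈ range n, w i * (a i - a (i + 1)) ≤ K * logPotential m (a 0) := by
  have hterm : ∀ i, w i * (a i - a (i + 1))
      ≤ K * (logPotential m (a i) - logPotential m (a (i + 1))) := by
    intro i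
    have hdec : a (i + 1) ≤ a i := ha i.le_succ
    rcases (ha₀ i).eq_or_lt with hzero | hpos
    · have : a (i + 1) = 0 := le_antisymm (hzero ▸ hdec) (ha₀ _)
      simp [← hzero, this]
    · calc w i * (a i - a (i + 1)) ≤ K / a i * (a i - a (i + 1)) :=
            mul_le_mul_of_nonneg_right (hw i hpos) (sub_nonneg.2 hdec)
        _ = K * ((a i - a (i + 1)) / a i) := by ring
        _ ≤ _ := mul_le_mul_of_nonneg_left
            (sub_div_le_logPotential_sub hm (ha₀ _) hdec (ham i hpos) (ham _)) hK
  calc ∑ i ∈ range n, w i * (a i - a (i + 1))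
      ≤ ∑ i ∈ range n, K * (logPotential m (a i) - logPotential m (a (i + 1))) :=
        sum_le_sum fun i _ => hterm i
    _ = K * (logPotential m (a 0) - logPotential m (a n)) := by
        rw [← mul_sum, sum_range_sub']
    _ ≤ K * logPotential m (a 0) :=
        mul_le_mul_of_nonneg_left (sub_le_self _ (logPotential_nonneg hm _)) hK

end LogPotential

-- Where the gain `mff f π i` vanishes, `x / 0 = 0` makes the price `0`.
noncomputable def price {V : Type*} [DecidableEq V] {n : ℕ} (f : Finset V → ℝ) (π : Fin n → V)
    (c : V → ℝ) (i : ℕ) : ℝ :=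
  if h : i < n then c (π ⟨i, h⟩) / mff f π ⟨i, h⟩ else 0

section Cost

variable {V : Type*} [DecidableEq V] {f : Finset V → ℝ} {n : ℕ} {c : V → ℝ}

lemma price_nonneg (hmono : Monotone f) (hc : ∀ u, 0 ≤ c u) (π : Fin n → V) (i : ℕ) :
    0 ≤ price f π c i := by
  unfold price
  split_ifs
  · exact div_nonneg (hc _) (marg_nonneg hmono _ _)
  · rfl

lemma sum_positiveGainSet_eq_sum_price_mul (hmono : Monotone f) (π : Fin n ≃ V) :
    ∑ u ∈ positiveGainSet f π, c u
      = ∑ i ∈ range n, price f π c i * (f (pref π (i + 1)) - f (pref π i)) := by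
  rw [positiveGainSet, sum_image π.injective.injOn, sum_filter, ← Fin.sum_univ_eq_sum_range]
  refine sum_congr rfl fun i _ => ?_
  rw [price, dif_pos i.isLt, ← mff_eq_sub]
  split_ifs with hgain
  · exact (div_mul_cancel₀ _ hgain.ne').symm
  · simp [(not_lt.1 hgain).antisymm (marg_nonneg hmono _ _)]

lemma partialSups_price_le (hmono : Monotone f)
    (hsub : ∀ A B : Finset V, f (A ∪ B) + f (A ∩ B) ≤ f A + f B)
    (hc : ∀ u, 0 < c u) {γ : ℝ} (hγ : 0 ≤ γ) {π : Fin n → V}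
    (hgreedy : ∀ i : Fin n, 0 < mff f π i →
      ∀ u : V, marg f u (pref π i) / c u ≤ γ * (mff f π i / c (π i)))
    (u : V) {i : ℕ} (hu : 0 < marg f u (pref π i)) :
    partialSups (price f π c) i ≤ γ * c u / marg f u (pref π i) := by
  have hbound : 0 ≤ γ * c u / marg f u (pref π i) := by
    have := hc u
    positivity
  refine partialSups_le _ _ _ fun l hli => ?_
  unfold price
  split_ifs with hl
  · by_cases hgain : 0 < mff f π ⟨l, hl⟩
    · have hmarg : marg f u (pref π i) ≤ marg f u (pref π l) :=
        marg_le_marg_of_subset hmono hsub u (pref_mono π hli)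
      have hg := hgreedy ⟨l, hl⟩ hgain u
      rw [div_le_iff₀ (hc u), mul_div_assoc', div_mul_eq_mul_div, le_div_iff₀ (hc _)] at hg
      rw [div_le_div_iff₀ hgain hu]
      nlinarith [hc (π ⟨l, hl⟩)]
    · rw [(not_lt.1 hgain).antisymm (marg_nonneg hmono _ _), div_zero]
      exact hbound
  · exact hbound

lemma sum_positiveGainSet_le_sum_sum_marg [Fintype V] (hmono : Monotone f)
    (hsub : ∀ A B : Finset V, f (A ∪ B) + f (A ∩ B) ≤ f A + f B) (hc : ∀ u, 0 ≤ c u)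
    (π : Fin n ≃ V) {Sstar : Finset V} (hSstar : f Sstar = f univ) :
    ∑ u ∈ positiveGainSet f π, c u ≤ ∑ u ∈ Sstar, ∑ i ∈ range n,
      partialSups (price f π c) i * (marg f u (pref π i) - marg f u (pref π (i + 1))) := by
  set w := partialSups (price f π c)
  have hpref_n : pref π n = univ := pref_eq_univ π π.surjective
  have hdeficit : ∀ i, f univ - f (pref π i) ≤ ∑ u ∈ Sstar, marg f u (pref π i) := fun i =>
    calc f univ - f (pref π i) ≤ f (Sstar ∪ pref π i) - f (pref π i) := by
          gcongr; exact hSstar ▸ hmono subset_union_left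
      _ ≤ _ := sub_le_sum_marg hmono hsub _ _
  calc ∑ u ∈ positiveGainSet f π, c u
      = ∑ i ∈ range n, price f π c i * (f (pref π (i + 1)) - f (pref π i)) :=
        sum_positiveGainSet_eq_sum_price_mul hmono π
    _ ≤ ∑ i ∈ range n, w i * ((f univ - f (pref π i)) - (f univ - f (pref π (i + 1)))) := by
        refine sum_le_sum fun i _ => ?_
        rw [sub_sub_sub_cancel_left]
        exact mul_le_mul_of_nonneg_right (le_partialSups _ i)
          (sub_nonneg.2 (hmono (pref_mono π i.le_succ)))
    _ ≤ ∑ i ∈ range n, w i * (∑ u ∈ Sstar, marg f u (pref π i)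
          - ∑ u ∈ Sstar, marg f u (pref π (i + 1))) := by
        refine sum_mul_sub_le_of_le w.monotone ?_ hdeficit ?_
        · simpa [w] using price_nonneg hmono hc π 0
        · simp [hpref_n, marg]
    _ = _ := by
        simp only [← sum_sub_distrib, mul_sum]
        exact sum_comm

end Cost

theorem greedy_trace_competitive_weighted_general {V : Type*} [Fintype V] [DecidableEq V] [Nonempty V]
    (f : Finset V → ℝ)
    (hmono : ∀ A B : Finset V, A ⊆ B → f A ≤ f B)
    (hsub : ∀ A B : Finset V, f (A ∪ B) + f (A ∩ B) ≤ f A + f B)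
    (c : V → ℝ) (hc : ∀ u : V, 0 < c u)
    (γ : ℝ) (hγ : 1 ≤ γ)
    (fmax fmin : ℝ)
    (hfmax : fmax = Finset.univ.sup' Finset.univ_nonempty (fun u : V => marg f u ∅))
    (hfmin_le : ∀ (u : V) (S : Finset V), 0 < marg f u S → fmin ≤ marg f u S)
    (hfmin_mem : ∃ (u : V) (S : Finset V), 0 < marg f u S ∧ marg f u S = fmin)
    (π : Fin (Fintype.card V) ≃ V)
    (hgreedy : ∀ i : Fin (Fintype.card V), 0 < mff f π i →
      ∀ u : V, marg f u (pref π i) / c u ≤ γ * (mff f π i / c (π i))) :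
    f ((Finset.univ.filter fun i : Fin (Fintype.card V) => 0 < mff f π i).image π)
        = f Finset.univ ∧
    ∀ Sstar : Finset V, f Sstar = f Finset.univ →
      ∑ u ∈ (Finset.univ.filter fun i : Fin (Fintype.card V) => 0 < mff f π i).image π, c u
        ≤ γ * (Real.log (fmax / fmin) + 1) * ∑ u ∈ Sstar, c u := by
  have hmono' : Monotone f := fun A B => hmono A B
  have hγ₀ : 0 ≤ γ := zero_le_one.trans hγ
  have hmarg_le_fmax : ∀ u, marg f u ∅ ≤ fmax := fun u =>
    hfmax ▸ le_sup' (fun u => marg f u ∅) (mem_univ u)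
  obtain ⟨u₀, S₀, hpos₀, hu₀⟩ := hfmin_mem
  have hfmin_pos : 0 < fmin := hu₀ ▸ hpos₀
  have hfmin_le_fmax : fmin ≤ fmax :=
    hu₀ ▸ (marg_le_marg_of_subset hmono' hsub u₀ (empty_subset S₀)).trans (hmarg_le_fmax u₀)
  refine ⟨apply_positiveGainSet_eq_apply_univ hmono' hsub π, fun Sstar hSstar => ?_⟩
  have hper : ∀ u, ∑ i ∈ range (Fintype.card V), partialSups (price f π c) i *
      (marg f u (pref π i) - marg f u (pref π (i + 1))) ≤ γ * c u * (Real.log (fmax / fmin) + 1) :=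
    fun u => by
      have hK : 0 ≤ γ * c u := mul_nonneg hγ₀ (hc u).le
      calc _ ≤ γ * c u * logPotential fmin (marg f u (pref π 0)) :=
            sum_mul_sub_le_logPotential hfmin_pos
              (fun i j hij => marg_le_marg_of_subset hmono' hsub u (pref_mono π hij))
              (fun i => marg_nonneg hmono' u _) (fun i => hfmin_le u _) hK
              (fun i => partialSups_price_le hmono' hsub hc hγ₀ hgreedy u) _
        _ ≤ _ := mul_le_mul_of_nonneg_left
            (logPotential_le hfmin_pos hfmin_le_fmax (by simpa using hmarg_le_fmax u)) hK
  calc _ ≤ _ := sum_positiveGainSet_le_sum_sum_marg hmono' hsub (fun u => (hc u).le) π hSstar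
    _ ≤ ∑ u ∈ Sstar, γ * c u * (Real.log (fmax / fmin) + 1) := sum_le_sum fun u _ => hper u
    _ = _ := by rw [← sum_mul, ← mul_sum]; ring

/-- If `π` is an approximate-greedy stack trace for cost-scaled coverage (every element `u` has
`f(u | π_{1:i-1})/c(u) ≤ γ · f(π_i | π_{1:i-1})/c(π_i)` whenever `f(π_i | π_{1:i-1}) > 0`),
then the set `S` of elements of positive marginal coverage fully covers, and its cost is at
most `γ (ln(fmax/fmin) + 1)` times the cost of any full cover `S*`. -/
theorem greedy_trace_competitive_weighted {V : Type*} [Fintype V] [DecidableEq V] [Nonempty V]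
    (f : Finset V → ℝ)
    (hmono : ∀ A B : Finset V, A ⊆ B → f A ≤ f B)
    (hsub : ∀ A B : Finset V, f (A ∪ B) + f (A ∩ B) ≤ f A + f B)
    (hf0 : f ∅ = 0)
    (c : V → ℝ) (hc : ∀ u : V, 0 < c u)
    (γ : ℝ) (hγ : 1 ≤ γ)
    (fmax fmin : ℝ)
    (hfmax : fmax = Finset.univ.sup' Finset.univ_nonempty (fun u : V => marg f u ∅))
    (hfmaxpos : 0 < fmax)
    (hfmin_le : ∀ (u : V) (S : Finset V), 0 < marg f u S → fmin ≤ marg f u S)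
    (hfmin_mem : ∃ (u : V) (S : Finset V), 0 < marg f u S ∧ marg f u S = fmin)
    (π : Fin (Fintype.card V) ≃ V)
    (hgreedy : ∀ i : Fin (Fintype.card V), 0 < mff f π i →
      ∀ u : V, marg f u (pref π i) / c u ≤ γ * (mff f π i / c (π i))) :
    f ((Finset.univ.filter fun i : Fin (Fintype.card V) => 0 < mff f π i).image π)
        = f Finset.univ ∧
    ∀ Sstar : Finset V, f Sstar = f Finset.univ →
      ∑ u ∈ (Finset.univ.filter fun i : Fin (Fintype.card V) => 0 < mff f π i).image π, c u
        ≤ γ * (Real.log (fmax / fmin) + 1) * ∑ u ∈ Sstar, c u :=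
  greedy_trace_competitive_weighted_general f hmono hsub c hc γ hγ fmax fmin hfmax hfmin_le
    hfmin_mem π hgreedy
end

section
/- Let f : 2^N → ℝ be monotone and submodular, let each element of N have a positive cost, and let γ > 1. Let π be a permutation of N that has no swaps and no γ-moves with respect to the weighted coverage mff_π. Then for all indices i, j with I_{π,ψ}(π_i, ψ_j) > 0, one has mff_π(π_i) > f(ψ_j | π_{1:i−1}) / (γ · c(ψ_j)²). -/
open Finset

/-- The marginal value `f(A | C) := f(A ∪ C) - f(C)` of a set function. -/
def margS {V : Type*} [DecidableEq V] (f : Finset V → ℝ) (A C : Finset V) : ℝ :=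
  f (A ∪ C) - f C

/-- The conditional mutual coverage `I_f(A; B | C) := f(A|C) + f(B|C) - f(A ∪ B | C)`. -/
def mutcov {V : Type*} [DecidableEq V] (f : Finset V → ℝ) (A B C : Finset V) : ℝ :=
  margS f A C + margS f B C - margS f (A ∪ B) C

/-- The `(i,j)` mutual affinity of the pair of permutations `(α, β)`:
`I_{α,β}(α_i, β_j) := I_f(α_i; β_j | α_{1:i−1} ∪ β_{1:j−1})`. -/
def mfI {V : Type*} [DecidableEq V] {n : ℕ} (f : Finset V → ℝ) (a b : Fin n → V)
    (i j : Fin n) : ℝ :=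
  mutcov f {a i} {b j} (pref a i ∪ pref b j)

/-- The weighted coverage `mff_π(π_i) := ∑_j I_{π,ψ}(π_i, ψ_j) / (c(π_i)·c(ψ_j))`. -/
noncomputable def mffw {V : Type*} [Fintype V] [DecidableEq V] {n : ℕ} (f : Finset V → ℝ) (c : V → ℝ)
    (π ψ : Fin n → V) (i : Fin n) : ℝ :=
  ∑ j : Fin n, mfI f π ψ i j / (c (π i) * c (ψ j))

/-- The weighted coverage that the element `π_q` would have after being moved to position
`p`, i.e. `mff_{π′}(π′_p)` where `π′` is obtained from `π` by moving `π_q` to position `p`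
(the prefix of `π′` at position `p` is `π_{1:p−1}`). -/
noncomputable def mffwMove {V : Type*} [Fintype V] [DecidableEq V] {n : ℕ} (f : Finset V → ℝ) (c : V → ℝ)
    (π ψ : Fin n → V) (p q : Fin n) : ℝ :=
  ∑ j : Fin n, mutcov f {π q} {ψ j} (pref π p ∪ pref ψ j) / (c (π q) * c (ψ j))

/-!
Put `u := ψ_j`. Conditioning on `ψ_{1:j'}` for `j' = 0, 1, …, j` telescopes:
`f(u | π_{1:i−1}) = ∑_{j' ≤ j} I_f(u; ψ_{j'} | π_{1:i−1} ∪ ψ_{1:j'−1})`, and since `ψ` sorts costs,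
`c(ψ_{j'}) ≤ c(u)` in every term, so `f(u | π_{1:i−1}) / c(u)²` is at most the weighted coverage
`u` would have if moved to position `i`. If `u` already lies in `π_{1:i−1}` the marginal vanishes.
Otherwise `u = π_q` with `q ≥ i`; for `q = i` this coverage is `mff_π(π_i)` itself, and for `q > i`
the absence of `γ`-moves and of swaps bounds it by `γ · mff_π(π_i)`. Strictness comes from
`mff_π(π_i) ≥ I_{π,ψ}(π_i, ψ_j) / (c(π_i) c(ψ_j)) > 0`.
-/

section SetFunction

variable {V : Type*} [DecidableEq V] {f : Finset V → ℝ}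

lemma mutcov_nonneg (hmono : ∀ A B : Finset V, A ⊆ B → f A ≤ f B)
    (hsub : ∀ A B : Finset V, f (A ∪ B) + f (A ∩ B) ≤ f A + f B)
    (A B C : Finset V) : 0 ≤ mutcov f A B C := by
  have hsubmod := hsub (A ∪ C) (B ∪ C)
  have hinter : f C ≤ f ((A ∪ C) ∩ (B ∪ C)) :=
    hmono _ _ (subset_inter subset_union_right subset_union_right)
  have hunion : A ∪ C ∪ (B ∪ C) = A ∪ B ∪ C := by
    ext x; simp only [mem_union]; tauto
  rw [hunion] at hsubmod
  unfold mutcov margS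
  linarith

lemma marg_eq_zero_of_mem {u : V} {C : Finset V} (hu : u ∈ C) : marg f u C = 0 := by
  rw [marg, insert_eq_of_mem hu, sub_self]

lemma mutcov_singleton_eq_marg_sub_marg (u v : V) (C : Finset V) :
    mutcov f {u} {v} C = marg f u C - marg f u (insert v C) := by
  simp only [mutcov, margS, marg, ← insert_eq, insert_union, insert_comm u v]
  ring

end SetFunction

section Prefix

variable {V : Type*} [DecidableEq V] {f : Finset V → ℝ} {n : ℕ}

lemma mem_pref {a : Fin n → V} {x : V} {i : ℕ} :
    x ∈ pref a i ↔ ∃ k : Fin n, (k : ℕ) < i ∧ a k = x := by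
  simp [pref]

lemma pref_zero_s15 (a : Fin n → V) : pref a 0 = ∅ := by
  simp [pref]

lemma pref_succ_s15 (a : Fin n → V) (k : Fin n) : pref a (k + 1) = insert (a k) (pref a k) := by
  ext x
  simp only [mem_pref, mem_insert, Nat.lt_succ_iff_lt_or_eq]
  constructor
  · rintro ⟨l, hl | hl, rfl⟩
    · exact Or.inr ⟨l, hl, rfl⟩
    · exact Or.inl (congrArg a (Fin.ext hl))
  · rintro (rfl | ⟨l, hl, rfl⟩)
    · exact ⟨k, Or.inr rfl, rfl⟩
    · exact ⟨l, Or.inl hl, rfl⟩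

lemma mem_pref_succ_self (a : Fin n → V) (k : Fin n) : a k ∈ pref a (k + 1) := by
  rw [pref_succ_s15]
  exact mem_insert_self _ _

lemma sum_Iic_mutcov_pref (u : V) (P : Finset V) (b : Fin n → V) (j : Fin n) :
    ∑ k ∈ Iic j, mutcov f {u} {b k} (P ∪ pref b k)
      = marg f u P - marg f u (P ∪ pref b (j + 1)) := by
  set T : ℕ → ℝ := fun k => marg f u (P ∪ pref b k)
  have hterm (k : Fin n) : mutcov f {u} {b k} (P ∪ pref b k) = T k - T (k + 1) := by
    simp only [T, mutcov_singleton_eq_marg_sub_marg, pref_succ_s15, union_insert]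
  calc ∑ k ∈ Iic j, mutcov f {u} {b k} (P ∪ pref b k)
      = ∑ k ∈ (Iic j).map Fin.valEmbedding, (T k - T (k + 1)) := by
        rw [sum_map]
        exact sum_congr rfl fun k _ => hterm k
    _ = ∑ k ∈ range (j + 1), (T k - T (k + 1)) := by
        rw [Fin.map_valEmbedding_Iic, Nat.range_succ_eq_Iic]
    _ = marg f u P - marg f u (P ∪ pref b (j + 1)) := by
        rw [sum_range_sub']
        simp only [T, pref_zero_s15, union_empty]

end Prefix

section Coverage

variable {V : Type*} [Fintype V] [DecidableEq V] {f : Finset V → ℝ} {n : ℕ}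

lemma mffwMove_self (c : V → ℝ) (π ψ : Fin n → V) (i : Fin n) :
    mffwMove f c π ψ i i = mffw f c π ψ i :=
  rfl

lemma marg_div_sq_le_mffwMove (hmono : ∀ A B : Finset V, A ⊆ B → f A ≤ f B)
    (hsub : ∀ A B : Finset V, f (A ∪ B) + f (A ∩ B) ≤ f A + f B)
    {c : V → ℝ} (hc : ∀ u : V, 0 < c u) {π ψ : Fin n → V}
    (hψ : ∀ j j' : Fin n, j ≤ j' → c (ψ j) ≤ c (ψ j'))
    {p q j : Fin n} (hq : π q = ψ j) :
    marg f (ψ j) (pref π p) / c (ψ j) ^ 2 ≤ mffwMove f c π ψ p q := by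
  set u := ψ j
  set P := pref π p
  have hcu := hc u
  have hterm_nonneg (k : Fin n) : 0 ≤ mutcov f {u} {ψ k} (P ∪ pref ψ k) :=
    mutcov_nonneg hmono hsub _ _ _
  have htelescope : ∑ k ∈ Iic j, mutcov f {u} {ψ k} (P ∪ pref ψ k) = marg f u P := by
    rw [sum_Iic_mutcov_pref, marg_eq_zero_of_mem (mem_union_right _ (mem_pref_succ_self ψ j)),
      sub_zero]
  calc marg f u P / c u ^ 2
      = ∑ k ∈ Iic j, mutcov f {u} {ψ k} (P ∪ pref ψ k) / (c u * c u) := by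
        rw [← sum_div, htelescope, sq]
    _ ≤ ∑ k ∈ Iic j, mutcov f {u} {ψ k} (P ∪ pref ψ k) / (c u * c (ψ k)) := by
        refine sum_le_sum fun k hk => div_le_div_of_nonneg_left (hterm_nonneg k)
          (mul_pos hcu (hc _)) ?_
        exact mul_le_mul_of_nonneg_left (hψ k j (mem_Iic.mp hk)) hcu.le
    _ ≤ ∑ k : Fin n, mutcov f {u} {ψ k} (P ∪ pref ψ k) / (c u * c (ψ k)) :=
        sum_le_sum_of_subset_of_nonneg (subset_univ _) fun k _ _ =>
          div_nonneg (hterm_nonneg k) (mul_pos hcu (hc _)).le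
    _ = mffwMove f c π ψ p q := by
        rw [mffwMove, hq]

lemma mffw_pos_of_mfI_pos (hmono : ∀ A B : Finset V, A ⊆ B → f A ≤ f B)
    (hsub : ∀ A B : Finset V, f (A ∪ B) + f (A ∩ B) ≤ f A + f B)
    {c : V → ℝ} (hc : ∀ u : V, 0 < c u) {π ψ : Fin n → V} {i j : Fin n}
    (hpos : 0 < mfI f π ψ i j) : 0 < mffw f c π ψ i := by
  have hterm_nonneg (k : Fin n) : 0 ≤ mfI f π ψ i k / (c (π i) * c (ψ k)) :=
    div_nonneg (mutcov_nonneg hmono hsub _ _ _) (mul_pos (hc _) (hc _)).le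
  exact lt_of_lt_of_le (div_pos hpos (mul_pos (hc _) (hc _)))
    (single_le_sum (fun k _ => hterm_nonneg k) (mem_univ j))

end Coverage

/-- If `π` has no swaps and no `γ`-moves with respect to the weighted coverage `mff_π`, then
for all `i, j` with positive mutual affinity `I_{π,ψ}(π_i, ψ_j)`, one has
`mff_π(π_i) > f(ψ_j | π_{1:i−1}) / (γ·c(ψ_j)²)`. -/
theorem mffw_lower_bound_of_stable {V : Type*} [Fintype V] [DecidableEq V]
    (f : Finset V → ℝ)
    (hmono : ∀ A B : Finset V, A ⊆ B → f A ≤ f B)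
    (hsub : ∀ A B : Finset V, f (A ∪ B) + f (A ∩ B) ≤ f A + f B)
    (c : V → ℝ) (hc : ∀ u : V, 0 < c u)
    (γ : ℝ) (hγ : 1 < γ)
    (π ψ : Fin (Fintype.card V) ≃ V)
    (hψ : ∀ j j' : Fin (Fintype.card V), j ≤ j' → c (ψ j) ≤ c (ψ j'))
    (hNoSwaps : ∀ i j : Fin (Fintype.card V), i ≤ j → mffw f c π ψ j ≤ mffw f c π ψ i)
    (hNoMoves : ∀ p q : Fin (Fintype.card V), p < q →
      ∃ i : Fin (Fintype.card V), p ≤ i ∧ i < q ∧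
        mffwMove f c π ψ p q < γ * mffw f c π ψ i) :
    ∀ i j : Fin (Fintype.card V), 0 < mfI f π ψ i j →
      marg f (ψ j) (pref π (i : ℕ)) / (γ * c (ψ j) ^ 2) < mffw f c π ψ i := by
  intro i j hpos
  have hmffw_pos := mffw_pos_of_mfI_pos hmono hsub hc hpos
  have hγ_pos : 0 < γ := one_pos.trans hγ
  rw [div_mul_eq_div_div_swap, div_lt_iff₀' hγ_pos]
  by_cases hmem : ψ j ∈ pref π i
  · rw [marg_eq_zero_of_mem hmem, zero_div]
    positivity
  set q := π.symm (ψ j)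
  have hq : π q = ψ j := π.apply_symm_apply (ψ j)
  have hiq : i ≤ q := not_lt.mp fun hqi => hmem (mem_pref.mpr ⟨q, hqi, hq⟩)
  have hmove := marg_div_sq_le_mffwMove hmono hsub hc hψ (p := i) hq
  rcases hiq.eq_or_lt with rfl | hlt
  · rw [mffwMove_self] at hmove
    exact hmove.trans_lt (lt_mul_of_one_lt_left hmffw_pos hγ)
  · obtain ⟨i', hii', -, hmove'⟩ := hNoMoves i q hlt
    exact hmove.trans_lt (hmove'.trans_le (by gcongr; exact hNoSwaps i i' hii'))
end
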